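/- arXiv:2410.22548 — 5 statements merged into one kernel-verified Lean document; each statement's English description precedes it below -/
import Mathlib

section
/- If w ∈ U_n, then no homing shuffle sorts w: for every homing shuffle f on S_n and every m ∈ ℕ, the permutation f^m(w) is not the identity. -/
/-- `w ∈ S_n`: a permutation of `{1,…,n}`, encoded as a permutation of `ℕ`
that fixes every point outside `[1,n]`. -/
def IsPermOn (n : ℕ) (w : Equiv.Perm ℕ) : Prop :=
  ∀ i : ℕ, i ∉ Finset.Icc 1 n → w i = i

/-- A homing shuffle on `S_n`: a map `f : S_n → S_n` such that for every `w ∈ S_n`,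
setting `k := w 1`, we have `f w k = k` and `f w i = w i` for all `i > k`. -/
def IsHomingShuffle (n : ℕ) (f : Equiv.Perm ℕ → Equiv.Perm ℕ) : Prop :=
  ∀ w : Equiv.Perm ℕ, IsPermOn n w →
    IsPermOn n (f w) ∧ f w (w 1) = w 1 ∧ ∀ i : ℕ, w 1 < i → f w i = w i

/-- `i_w`: the smallest `k ∈ {1,…,n}` such that `w({1,…,k}) = {1,…,k}`. -/
noncomputable def permIdx (n : ℕ) (w : Equiv.Perm ℕ) : ℕ :=
  sInf {k : ℕ | 1 ≤ k ∧ k ≤ n ∧ (Finset.Icc 1 k).image ⇑w = Finset.Icc 1 k}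

/-- `U_n`: the set of unsortable permutations in `S_n`, i.e. those `w ∈ S_n`
having a non-fixed point `i > i_w`. -/
def Unsortables (n : ℕ) : Set (Equiv.Perm ℕ) :=
  {w | IsPermOn n w ∧ ∃ i : ℕ, permIdx n w < i ∧ w i ≠ i}

lemma perm_image_self (g : Equiv.Perm ℕ) (s : Finset ℕ) (h : ∀ i ∈ s, g i ∈ s) :
    s.image ⇑g = s := by
  apply Finset.eq_of_subset_of_card_le
  · intro j hj
    obtain ⟨i, hi, rfl⟩ := Finset.mem_image.mp hj
    exact h i hi
  · rw [Finset.card_image_of_injective _ g.injective]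

lemma mem_Icc_of_permOn {n : ℕ} {g : Equiv.Perm ℕ} (hg : IsPermOn n g) {i : ℕ}
    (hi : i ∈ Finset.Icc 1 n) : g i ∈ Finset.Icc 1 n := by
  by_contra h
  have h2 : g (g i) = g i := hg (g i) h
  have h3 : g i = i := g.injective h2
  rw [h3] at h
  exact h hi

lemma step_unsortable (n : ℕ) (f : Equiv.Perm ℕ → Equiv.Perm ℕ)
    (hf : IsHomingShuffle n f) (w : Equiv.Perm ℕ) (hw : w ∈ Unsortables n) :
    f w ∈ Unsortables n := by
  obtain ⟨hwp, i, hik, hwi⟩ := hw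
  have hin : i ∈ Finset.Icc 1 n := by
    by_contra h; exact hwi (hwp i h)
  have hn : 1 ≤ n := by simp only [Finset.mem_Icc] at hin; omega
  obtain ⟨hfp, hf1, hfgt⟩ := hf w hwp
  have hS : permIdx n w ∈
      {k : ℕ | 1 ≤ k ∧ k ≤ n ∧ (Finset.Icc 1 k).image ⇑w = Finset.Icc 1 k} := by
    apply Nat.sInf_mem
    exact ⟨n, hn, le_rfl, perm_image_self w _ (fun j hj => mem_Icc_of_permOn hwp hj)⟩
  obtain ⟨hk1, hkn, hkim⟩ := hS
  set k := permIdx n w with hkdef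
  have hw1k : w 1 ≤ k := by
    have h1 : w 1 ∈ Finset.Icc 1 k := by
      rw [← hkim]
      exact Finset.mem_image_of_mem _ (by simp [hk1])
    simp only [Finset.mem_Icc] at h1; omega
  have hwhigh : ∀ j ∈ Finset.Icc (k+1) n, w j ∈ Finset.Icc (k+1) n := by
    intro j hj
    simp only [Finset.mem_Icc] at hj
    have h1 : w j ∈ Finset.Icc 1 n :=
      mem_Icc_of_permOn hwp (by simp only [Finset.mem_Icc]; omega)
    have h2 : w j ∉ Finset.Icc 1 k := by
      intro h
      rw [← hkim] at h
      obtain ⟨j', hj', hjj⟩ := Finset.mem_image.mp h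
      have hje := w.injective hjj
      subst hje
      simp only [Finset.mem_Icc] at hj'
      omega
    simp only [Finset.mem_Icc] at h1 h2 ⊢
    omega
  have hfhigh : ∀ j ∈ Finset.Icc (k+1) n, f w j ∈ Finset.Icc (k+1) n := by
    intro j hj
    have hj' : w 1 < j := by
      simp only [Finset.mem_Icc] at hj; omega
    rw [hfgt j hj']
    exact hwhigh j hj
  have himhigh : (Finset.Icc (k+1) n).image ⇑(f w) = Finset.Icc (k+1) n :=
    perm_image_self _ _ hfhigh
  have hflow : ∀ j ∈ Finset.Icc 1 k, f w j ∈ Finset.Icc 1 k := by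
    intro j hj
    simp only [Finset.mem_Icc] at hj
    have h1 : f w j ∈ Finset.Icc 1 n :=
      mem_Icc_of_permOn hfp (by simp only [Finset.mem_Icc]; omega)
    have h2 : f w j ∉ Finset.Icc (k+1) n := by
      intro h
      rw [← himhigh] at h
      obtain ⟨j', hj', hjj⟩ := Finset.mem_image.mp h
      have hje := (f w).injective hjj
      subst hje
      simp only [Finset.mem_Icc] at hj'
      omega
    simp only [Finset.mem_Icc] at h1 h2 ⊢
    omega
  have hle : permIdx n (f w) ≤ k :=
    Nat.sInf_le ⟨hk1, hkn, perm_image_self _ _ hflow⟩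
  refine ⟨hfp, i, lt_of_le_of_lt hle hik, ?_⟩
  rw [hfgt i (lt_of_le_of_lt hw1k hik)]
  exact hwi

theorem stmt_10 (n : ℕ) (w : Equiv.Perm ℕ) (hw : w ∈ Unsortables n)
    (f : Equiv.Perm ℕ → Equiv.Perm ℕ) (hf : IsHomingShuffle n f) (m : ℕ) :
    f^[m] w ≠ 1 := by
  have key : f^[m] w ∈ Unsortables n := by
    induction m with
    | zero => simpa using hw
    | succ m ih =>
      rw [Function.iterate_succ_apply']
      exact step_unsortable n f hf _ ih
  intro h
  obtain ⟨-, i, -, hi⟩ := key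
  rw [h] at hi
  exact hi rfl
end

section
/- Let M be a max shuffle on S_n and let w ∈ S_n with w ∉ U_n. Then M sorts w: there exists m ∈ ℕ such that M^m(w) is the identity permutation. -/
/-- A max shuffle on `S_n`: a homing shuffle `M` such that for every `w ∈ S_n`
with `w 1 ≠ 1`, the new front card `M w 1` equals `max (w({2,…,k}))` where `k := w 1`. -/
def IsMaxShuffle (n : ℕ) (M : Equiv.Perm ℕ → Equiv.Perm ℕ) : Prop :=
  IsHomingShuffle n M ∧
    ∀ w : Equiv.Perm ℕ, IsPermOn n w → w 1 ≠ 1 →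
      ((Finset.Icc 2 (w 1)).image ⇑w).max = (M w 1 : WithBot ℕ)

lemma image_eq_self (w : Equiv.Perm ℕ) (s : Finset ℕ) (h : ∀ i ∈ s, w i ∈ s) :
    s.image ⇑w = s := by
  apply Finset.eq_of_subset_of_card_le
  · intro x hx
    simp only [Finset.mem_image] at hx
    obtain ⟨i, hi, rfl⟩ := hx
    exact h i hi
  · rw [Finset.card_image_of_injective _ w.injective]

lemma fix_gt {v : Equiv.Perm ℕ} {b : ℕ} (h : ∀ c, b < c → v c = c) {i : ℕ}
    (hi : i ≤ b) : v i ≤ b := by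
  by_contra hc
  push_neg at hc
  have := v.injective (h _ hc)
  omega

lemma perm_pos {n : ℕ} {w : Equiv.Perm ℕ} (hw : IsPermOn n w) {i : ℕ} (hi : 1 ≤ i) :
    1 ≤ w i := by
  have h0 : w 0 = 0 := hw 0 (by simp)
  rcases Nat.eq_zero_or_pos (w i) with h | h
  · have : w i = w 0 := by rw [h, h0]
    have := w.injective this
    omega
  · exact h

lemma maps_Icc {n : ℕ} {w : Equiv.Perm ℕ} (hw : IsPermOn n w) :
    ∀ i ∈ Finset.Icc 1 n, w i ∈ Finset.Icc 1 n := by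
  intro i hi
  by_contra hc
  have h := hw _ hc
  have := w.injective h
  rw [this] at hc
  exact hc hi

lemma permIdx_le {n : ℕ} {w : Equiv.Perm ℕ} {x : ℕ} (h1 : 1 ≤ x) (h2 : x ≤ n)
    (h3 : (Finset.Icc 1 x).image ⇑w = Finset.Icc 1 x) : permIdx n w ≤ x :=
  Nat.sInf_le ⟨h1, h2, h3⟩

lemma permIdx_mem {n : ℕ} {w : Equiv.Perm ℕ}
    (h : {k : ℕ | 1 ≤ k ∧ k ≤ n ∧ (Finset.Icc 1 k).image ⇑w = Finset.Icc 1 k}.Nonempty) :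
    1 ≤ permIdx n w ∧ permIdx n w ≤ n ∧
      (Finset.Icc 1 (permIdx n w)).image ⇑w = Finset.Icc 1 (permIdx n w) :=
  Nat.sInf_mem h

lemma key (n : ℕ) (M : Equiv.Perm ℕ → Equiv.Perm ℕ) (hM : IsMaxShuffle n M) :
    ∀ N w, IsPermOn n w → (∀ i, permIdx n w < i → w i = i) →
      2 * permIdx n w - w 1 ≤ N → ∃ m, M^[m] w = 1 := by
  intro N
  induction N using Nat.strong_induction_on with
  | _ N ih =>
  intro w hw hU hΦ
  by_cases hw1 : w = 1
  · exact ⟨0, by simpa using hw1⟩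
  have hwne : ∃ i, w i ≠ i := by
    by_contra h
    push_neg at h
    exact hw1 (Equiv.ext fun i => h i)
  obtain ⟨i0, hi0⟩ := hwne
  have hi0n : i0 ∈ Finset.Icc 1 n := by
    by_contra h
    exact hi0 (hw i0 h)
  have hn1 : 1 ≤ n := by
    simp only [Finset.mem_Icc] at hi0n
    omega
  have hSne : {k : ℕ | 1 ≤ k ∧ k ≤ n ∧
      (Finset.Icc 1 k).image ⇑w = Finset.Icc 1 k}.Nonempty :=
    ⟨n, hn1, le_rfl, image_eq_self w _ (maps_Icc hw)⟩
  obtain ⟨hj1, hjn, hjimg⟩ := permIdx_mem hSne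
  -- k := w 1 is in [1, j]
  have hk_mem : w 1 ∈ Finset.Icc 1 (permIdx n w) := by
    rw [← hjimg]
    exact Finset.mem_image_of_mem _ (Finset.mem_Icc.mpr ⟨le_rfl, hj1⟩)
  have hkmem := Finset.mem_Icc.mp hk_mem
  have hk1 : w 1 ≠ 1 := by
    intro hk
    have h1S : permIdx n w ≤ 1 := permIdx_le le_rfl hn1 (by
      rw [Finset.Icc_self, Finset.image_singleton, hk])
    have hj1' : permIdx n w = 1 := le_antisymm h1S hj1
    apply hw1
    refine Equiv.ext fun i => ?_
    simp only [Equiv.Perm.one_apply]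
    rcases Nat.lt_or_ge i 2 with hi | hi
    · interval_cases i
      · exact hw 0 (by simp)
      · exact hk
    · exact hU i (by omega)
  have hk2 : 2 ≤ w 1 := by omega
  -- facts about M w
  obtain ⟨hMperm, hMk, hMgt⟩ := hM.1 w hw
  have hmax := hM.2 w hw hk1
  have hμmem : M w 1 ∈ (Finset.Icc 2 (w 1)).image ⇑w := Finset.mem_of_max hmax
  have hμub : ∀ x ∈ (Finset.Icc 2 (w 1)).image ⇑w, x ≤ M w 1 := by
    intro x hx
    have h := Finset.le_max hx
    rw [hmax] at h
    exact WithBot.coe_le_coe.mp h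
  obtain ⟨iμ, hiμ, hwiμ⟩ := Finset.mem_image.mp hμmem
  have hiμ' := Finset.mem_Icc.mp hiμ
  have hμne : M w 1 ≠ w 1 := by
    intro h
    have : iμ = 1 := w.injective (hwiμ.trans h)
    omega
  have hμle_j : M w 1 ≤ permIdx n w := by
    have h : w iμ ∈ Finset.Icc 1 (permIdx n w) := by
      rw [← hjimg]
      exact Finset.mem_image_of_mem _ (Finset.mem_Icc.mpr ⟨by omega, by omega⟩)
    rw [hwiμ] at h
    exact (Finset.mem_Icc.mp h).2
  rcases eq_or_lt_of_le hkmem.2 with hjk | hjk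
  · -- Case j = w 1 : permIdx drops to w 1 - 1
    have hμlt : M w 1 < w 1 := by omega
    have hμge : w 1 - 1 ≤ M w 1 := by
      have hmem : w 1 - 1 ∈ Finset.Icc 1 (permIdx n w) :=
        Finset.mem_Icc.mpr ⟨by omega, by omega⟩
      rw [← hjimg] at hmem
      obtain ⟨i', hi', hwi'⟩ := Finset.mem_image.mp hmem
      have hi'2 := Finset.mem_Icc.mp hi'
      have hne1 : i' ≠ 1 := by
        intro h
        rw [h] at hwi'
        omega
      exact hμub _ (Finset.mem_image.mpr
        ⟨i', Finset.mem_Icc.mpr ⟨by omega, by omega⟩, hwi'⟩)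
    have hμeq : M w 1 = w 1 - 1 := by omega
    have hfix' : ∀ c, w 1 - 1 < c → M w c = c := by
      intro c hc
      by_cases hcn : c ∈ Finset.Icc 1 n
      · rcases eq_or_lt_of_le (show w 1 ≤ c by omega) with h | h
        · rw [← h]; exact hMk
        · rw [hMgt c h]; exact hU c (by omega)
      · exact hMperm c hcn
    have himg' : (Finset.Icc 1 (w 1 - 1)).image ⇑(M w) = Finset.Icc 1 (w 1 - 1) := by
      apply image_eq_self
      intro i hi
      have h1 := Finset.mem_Icc.mp hi
      exact Finset.mem_Icc.mpr ⟨perm_pos hMperm h1.1, fix_gt hfix' h1.2⟩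
    have hj'le : permIdx n (M w) ≤ w 1 - 1 := permIdx_le (by omega) (by omega) himg'
    have hS'ne : {k : ℕ | 1 ≤ k ∧ k ≤ n ∧
        (Finset.Icc 1 k).image ⇑(M w) = Finset.Icc 1 k}.Nonempty :=
      ⟨w 1 - 1, by omega, by omega, himg'⟩
    obtain ⟨hj'1, hj'n, hj'img⟩ := permIdx_mem hS'ne
    have hμle_j' : M w 1 ≤ permIdx n (M w) := by
      have h : M w 1 ∈ Finset.Icc 1 (permIdx n (M w)) := by
        rw [← hj'img]
        exact Finset.mem_image_of_mem _ (Finset.mem_Icc.mpr ⟨le_rfl, hj'1⟩)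
      exact (Finset.mem_Icc.mp h).2
    have hj'eq : permIdx n (M w) = w 1 - 1 := by omega
    have hU' : ∀ i, permIdx n (M w) < i → M w i = i := by
      intro i hi
      exact hfix' i (by omega)
    obtain ⟨m, hm⟩ := ih (w 1 - 1) (by omega) (M w) hMperm hU' (by rw [hj'eq, hμeq]; omega)
    exact ⟨m + 1, by rw [Function.iterate_succ_apply]; exact hm⟩
  · -- Case w 1 < j : permIdx stays, top card increases
    have hμgt : w 1 < M w 1 := by
      by_contra hc
      push_neg at hc
      have hμlt : M w 1 < w 1 := lt_of_le_of_ne hc hμne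
      have himgk : (Finset.Icc 1 (w 1)).image ⇑w = Finset.Icc 1 (w 1) := by
        apply image_eq_self
        intro i hi
        have h1 := Finset.mem_Icc.mp hi
        rcases eq_or_lt_of_le h1.1 with h | h
        · rw [← h]
          exact Finset.mem_Icc.mpr ⟨by omega, le_rfl⟩
        · have hx : w i ∈ (Finset.Icc 2 (w 1)).image ⇑w :=
            Finset.mem_image_of_mem _ (Finset.mem_Icc.mpr ⟨by omega, h1.2⟩)
          have := hμub _ hx
          exact Finset.mem_Icc.mpr ⟨perm_pos hw (by omega), by omega⟩
      have hle : permIdx n w ≤ w 1 := permIdx_le (by omega) (by omega) himgk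
      omega
    have hfix' : ∀ c, permIdx n w < c → M w c = c := by
      intro c hc
      by_cases hcn : c ∈ Finset.Icc 1 n
      · rw [hMgt c (by omega)]
        exact hU c hc
      · exact hMperm c hcn
    have himgj' : (Finset.Icc 1 (permIdx n w)).image ⇑(M w)
        = Finset.Icc 1 (permIdx n w) := by
      apply image_eq_self
      intro i hi
      have h1 := Finset.mem_Icc.mp hi
      exact Finset.mem_Icc.mpr ⟨perm_pos hMperm h1.1, fix_gt hfix' h1.2⟩
    have hj'le : permIdx n (M w) ≤ permIdx n w := permIdx_le hj1 hjn himgj'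
    have hS'ne : {k : ℕ | 1 ≤ k ∧ k ≤ n ∧
        (Finset.Icc 1 k).image ⇑(M w) = Finset.Icc 1 k}.Nonempty :=
      ⟨permIdx n w, hj1, hjn, himgj'⟩
    obtain ⟨hj'1, hj'n, hj'img⟩ := permIdx_mem hS'ne
    have hμle_j' : M w 1 ≤ permIdx n (M w) := by
      have h : M w 1 ∈ Finset.Icc 1 (permIdx n (M w)) := by
        rw [← hj'img]
        exact Finset.mem_image_of_mem _ (Finset.mem_Icc.mpr ⟨le_rfl, hj'1⟩)
      exact (Finset.mem_Icc.mp h).2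
    have hj'eq : permIdx n (M w) = permIdx n w := by
      by_contra hne
      have hlt : permIdx n (M w) < permIdx n w := lt_of_le_of_ne hj'le hne
      have hmaps : ∀ i ∈ Finset.Ioc (permIdx n (M w)) (permIdx n w),
          M w i ∈ Finset.Ioc (permIdx n (M w)) (permIdx n w) := by
        intro i hi
        have h1 := Finset.mem_Ioc.mp hi
        have h2 : M w i ≤ permIdx n w := fix_gt hfix' h1.2
        have h3 : permIdx n (M w) < M w i := by
          by_contra hc
          push_neg at hc
          have hm : M w i ∈ Finset.Icc 1 (permIdx n (M w)) :=
            Finset.mem_Icc.mpr ⟨perm_pos hMperm (by omega), hc⟩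
          rw [← hj'img] at hm
          obtain ⟨m', hm', hmm⟩ := Finset.mem_image.mp hm
          have heq := (M w).injective hmm
          have hm'' := Finset.mem_Icc.mp hm'
          omega
        exact Finset.mem_Ioc.mpr ⟨h3, h2⟩
      have hwIoc : ∀ i ∈ Finset.Ioc (permIdx n (M w)) (permIdx n w),
          w i ∈ Finset.Ioc (permIdx n (M w)) (permIdx n w) := by
        intro i hi
        have h1 := Finset.mem_Ioc.mp hi
        rw [← hMgt i (by omega)]
        exact hmaps i hi
      have himgIocw := image_eq_self w _ hwIoc
      have hmapsw : ∀ i ∈ Finset.Icc 1 (permIdx n (M w)),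
          w i ∈ Finset.Icc 1 (permIdx n (M w)) := by
        intro i hi
        have h1 := Finset.mem_Icc.mp hi
        have h2 : w i ≤ permIdx n w := fix_gt hU (by omega)
        have h3 : 1 ≤ w i := perm_pos hw (by omega)
        by_contra hc
        have hgt : permIdx n (M w) < w i := by
          rcases Nat.lt_or_ge (permIdx n (M w)) (w i) with h | h
          · exact h
          · exact absurd (Finset.mem_Icc.mpr ⟨h3, h⟩) hc
        have hm : w i ∈ Finset.Ioc (permIdx n (M w)) (permIdx n w) :=
          Finset.mem_Ioc.mpr ⟨hgt, h2⟩
        rw [← himgIocw] at hm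
        obtain ⟨m', hm', hmm⟩ := Finset.mem_image.mp hm
        have heq := w.injective hmm
        have hm'' := Finset.mem_Ioc.mp hm'
        omega
      have := permIdx_le (n := n) (w := w) (by omega) (by omega)
        (image_eq_self w _ hmapsw)
      omega
    have hU' : ∀ i, permIdx n (M w) < i → M w i = i := by
      intro i hi
      exact hfix' i (by omega)
    obtain ⟨m, hm⟩ := ih (2 * permIdx n w - M w 1) (by omega) (M w) hMperm hU' (by omega)
    exact ⟨m + 1, by rw [Function.iterate_succ_apply]; exact hm⟩

theorem stmt_14 (n : ℕ) (M : Equiv.Perm ℕ → Equiv.Perm ℕ)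
    (hM : IsMaxShuffle n M) (w : Equiv.Perm ℕ) (hw : IsPermOn n w)
    (hwU : w ∉ Unsortables n) :
    ∃ m : ℕ, M^[m] w = 1 := by
  have hU : ∀ i, permIdx n w < i → w i = i := by
    intro i hi
    by_contra h
    exact hwU ⟨hw, i, hi, h⟩
  exact key n M hM (2 * permIdx n w - w 1) w hw hU le_rfl
end

section
/- Let M and M' be two (possibly equal) max shuffles on S_n, and let w, w' ∈ S_n with w ~ w'. Then M(w) ~ M'(w'). -/
/-- The equivalence relation `w ~ w'`: the front cards agree, and the two
permutations agree at all positions above the front card. -/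
def FrontEquiv (w w' : Equiv.Perm ℕ) : Prop :=
  w 1 = w' 1 ∧ ∀ i : ℕ, w 1 < i → w i = w' i

lemma permOn_maps {n : ℕ} {w : Equiv.Perm ℕ} (hw : IsPermOn n w) {i : ℕ}
    (hi : i ∈ Finset.Icc 1 n) : w i ∈ Finset.Icc 1 n := by
  by_contra h
  have h1 := hw (w i) h
  have h2 : w i = i := w.injective h1
  exact h (by rw [h2]; exact hi)

lemma img_subset {n : ℕ} {w w' : Equiv.Perm ℕ} (hw : IsPermOn n w) (hw' : IsPermOn n w')
    (hk : w 1 = w' 1) (hagree : ∀ i : ℕ, w 1 < i → w i = w' i) {y i : ℕ}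
    (h2 : 2 ≤ i) (hik : i ≤ w 1) (hy : w i = y) :
    ∃ j : ℕ, 2 ≤ j ∧ j ≤ w 1 ∧ w' j = y := by
  set j := w'.symm y with hj
  have hjy : w' j = y := w'.apply_symm_apply y
  have hjk : j ≤ w 1 := by
    by_contra hc
    push_neg at hc
    have h3 : w j = w' j := hagree j hc
    have h4 : w j = w i := by rw [h3, hjy, hy]
    have := w.injective h4
    omega
  have hj2 : 2 ≤ j := by
    by_contra hc
    push_neg at hc
    have hcases : j = 0 ∨ j = 1 := by omega
    rcases hcases with h0 | h0
    · have hz : w' 0 = 0 := hw' 0 (by simp)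
      have hw0 : w 0 = 0 := hw 0 (by simp)
      have h4 : w i = w 0 := by rw [hy, ← hjy, h0, hz, hw0]
      have := w.injective h4
      omega
    · have h4 : w i = w 1 := by rw [hy, ← hjy, h0, ← hk]
      have := w.injective h4
      omega
  exact ⟨j, hj2, hjk, hjy⟩

theorem stmt_16 (n : ℕ) (M M' : Equiv.Perm ℕ → Equiv.Perm ℕ)
    (hM : IsMaxShuffle n M) (hM' : IsMaxShuffle n M')
    (w w' : Equiv.Perm ℕ) (hw : IsPermOn n w) (hw' : IsPermOn n w')
    (hww' : FrontEquiv w w') :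
    FrontEquiv (M w) (M' w') := by
  obtain ⟨hM1, hM2⟩ := hM
  obtain ⟨hM'1, hM'2⟩ := hM'
  obtain ⟨hk, hagree⟩ := hww'
  obtain ⟨_, hfix, hgt⟩ := hM1 w hw
  obtain ⟨_, hfix', hgt'⟩ := hM'1 w' hw'
  by_cases h1 : w 1 = 1
  · have h1' : w' 1 = 1 := hk ▸ h1
    have e1 : M w 1 = 1 := by have := hfix; rw [h1] at this; exact this
    have e2 : M' w' 1 = 1 := by have := hfix'; rw [h1'] at this; exact this
    refine ⟨e1.trans e2.symm, fun i hi => ?_⟩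
    rw [e1] at hi
    rw [hgt i (by rw [h1]; exact hi), hgt' i (by rw [h1']; exact hi)]
    exact hagree i (by rw [h1]; exact hi)
  · have h1' : w' 1 ≠ 1 := hk ▸ h1
    have hn : 1 ≤ n := by
      by_contra hc
      exact h1 (hw 1 (by simp; omega))
    have hkn : w 1 ≤ n := by
      have := permOn_maps hw (show 1 ∈ Finset.Icc 1 n by simp [hn])
      exact (Finset.mem_Icc.mp this).2
    -- the two image sets coincide
    have himg : (Finset.Icc 2 (w 1)).image ⇑w = (Finset.Icc 2 (w' 1)).image ⇑w' := by
      rw [← hk]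
      ext y
      simp only [Finset.mem_image, Finset.mem_Icc]
      constructor
      · rintro ⟨i, ⟨hi2, hik⟩, hy⟩
        obtain ⟨j, hj2, hjk, hjy⟩ := img_subset hw hw' hk hagree hi2 hik hy
        exact ⟨j, ⟨hj2, hjk⟩, hjy⟩
      · rintro ⟨i, ⟨hi2, hik⟩, hy⟩
        have hk' : w' 1 = w 1 := hk.symm
        have hagree' : ∀ i : ℕ, w' 1 < i → w' i = w i := fun i hi =>
          (hagree i (hk ▸ hi)).symm
        obtain ⟨j, hj2, hjk, hjy⟩ :=
          img_subset hw' hw hk' hagree' hi2 (hk ▸ hik) hy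
        exact ⟨j, ⟨hj2, hk' ▸ hjk⟩, hjy⟩
    have hmax : ((Finset.Icc 2 (w 1)).image ⇑w).max = (M w 1 : WithBot ℕ) := hM2 w hw h1
    have hmax' : ((Finset.Icc 2 (w 1)).image ⇑w).max = (M' w' 1 : WithBot ℕ) := by
      rw [himg]; exact hM'2 w' hw' h1'
    have hfront : M w 1 = M' w' 1 := by
      have := hmax.symm.trans hmax'
      exact_mod_cast this
    refine ⟨hfront, fun i hi => ?_⟩
    -- show M w 1 ≥ w 1 - 1 via cardinality
    set m := M w 1 with hm
    have hsub : (Finset.Icc 2 (w 1)).image ⇑w ⊆ Finset.Icc 1 m := by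
      intro a ha
      simp only [Finset.mem_Icc]
      constructor
      · obtain ⟨b, hb, hba⟩ := Finset.mem_image.mp ha
        simp only [Finset.mem_Icc] at hb
        have : w b ∈ Finset.Icc 1 n := permOn_maps hw (by simp only [Finset.mem_Icc]; omega)
        simp only [Finset.mem_Icc] at this
        omega
      · have hle : (a : WithBot ℕ) ≤ ((Finset.Icc 2 (w 1)).image ⇑w).max :=
          Finset.le_max ha
        rw [hmax] at hle
        exact_mod_cast hle
    have hcard : (Finset.Icc 2 (w 1)).card ≤ (Finset.Icc 1 m).card := by
      calc (Finset.Icc 2 (w 1)).card = ((Finset.Icc 2 (w 1)).image ⇑w).card :=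
            (Finset.card_image_of_injective _ w.injective).symm
        _ ≤ _ := Finset.card_le_card hsub
    rw [Nat.card_Icc, Nat.card_Icc] at hcard
    -- so  w 1 - 1 ≤ m,  hence i > m  ⇒  i ≥ w 1
    have hik : w 1 ≤ i := by omega
    rcases eq_or_lt_of_le hik with heq | hlt
    · rw [← heq, hfix, hk, hfix']
    · rw [hgt i hlt, hgt' i (hk ▸ hlt)]
      exact hagree i hlt
end

section
/- Let M and M' be two max shuffles on S_n. Then for every i ∈ ℕ and every w ∈ S_n, one has M^i(w)(1) = M'^i(w)(1); that is, the sequence of front cards under iteration does not depend on the choice of max shuffle. -/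
lemma permOn_zero {n} {w : Equiv.Perm ℕ} (hw : IsPermOn n w) : w 0 = 0 :=
  hw 0 (by simp)

lemma permOn_pos {n} {w : Equiv.Perm ℕ} (hw : IsPermOn n w) {i : ℕ} (hi : 1 ≤ i) :
    1 ≤ w i := by
  rcases Nat.eq_zero_or_pos (w i) with h | h
  · exfalso
    have := w.injective (h.trans (permOn_zero hw).symm)
    omega
  · exact h

lemma image_eq_of_eq_off {u w : Equiv.Perm ℕ} {S : Finset ℕ}
    (h : ∀ i, i ∉ S → u i = w i) : S.image ⇑u = S.image ⇑w := by
  have key : ∀ (u w : Equiv.Perm ℕ), (∀ i, i ∉ S → u i = w i) →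
      S.image ⇑u ⊆ S.image ⇑w := by
    intro u w h a ha
    rw [Finset.mem_image] at ha ⊢
    obtain ⟨i, hi, rfl⟩ := ha
    by_cases hj : (w.symm (u i)) ∈ S
    · exact ⟨w.symm (u i), hj, w.apply_symm_apply _⟩
    · exfalso
      have h1 : u (w.symm (u i)) = w (w.symm (u i)) := h _ hj
      rw [w.apply_symm_apply] at h1
      have h2 := u.injective h1
      rw [h2] at hj
      exact hj hi
  exact le_antisymm (key u w h) (key w u fun i hi => (h i hi).symm)

/-- Invariant: equal front card, and equal value sets on positions `2..j`
for every `j` at least the front card. -/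
def FrontRel (n : ℕ) (w v : Equiv.Perm ℕ) : Prop :=
  IsPermOn n w ∧ IsPermOn n v ∧ w 1 = v 1 ∧
    ∀ j, w 1 ≤ j → (Finset.Icc 2 j).image ⇑w = (Finset.Icc 2 j).image ⇑v

lemma front_step {n : ℕ} {M M' : Equiv.Perm ℕ → Equiv.Perm ℕ}
    (hM : IsMaxShuffle n M) (hM' : IsMaxShuffle n M')
    {w v : Equiv.Perm ℕ} (h : FrontRel n w v) : FrontRel n (M w) (M' v) := by
  obtain ⟨hw, hv, hk, hsets⟩ := h
  obtain ⟨hMw, hMwk, hMwgt⟩ := hM.1 w hw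
  obtain ⟨hMv, hMvk, hMvgt⟩ := hM'.1 v hv
  have hk1 : 1 ≤ w 1 := permOn_pos hw le_rfl
  -- front cards agree after one step
  have hfront : M w 1 = M' v 1 := by
    by_cases hone : w 1 = 1
    · have h1 : M w 1 = 1 := by rw [hone] at hMwk; exact hMwk
      have h2 : M' v 1 = 1 := by
        have hv1 : v 1 = 1 := by rw [← hk, hone]
        rw [hv1] at hMvk; exact hMvk
      rw [h1, h2]
    · have e1 := hM.2 w hw hone
      have e2 := hM'.2 v hv (by rw [← hk]; exact hone)
      rw [← hk] at e2
      rw [hsets (w 1) le_rfl] at e1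
      rw [e1] at e2
      exact_mod_cast e2
  have hm1 : 1 ≤ M w 1 := permOn_pos hMw le_rfl
  -- images of full prefixes `1..j` under `M w` agree with those under `w`, for `j ≥ w 1`
  have himg : ∀ j, w 1 ≤ j →
      (Finset.Icc 1 j).image ⇑(M w) = (Finset.Icc 1 j).image ⇑w := by
    intro j hj
    apply image_eq_of_eq_off
    intro i hi
    rw [Finset.mem_Icc] at hi
    push_neg at hi
    by_cases h0 : i = 0
    · subst h0; rw [permOn_zero hMw, permOn_zero hw]
    · exact hMwgt i (by omega)
  have himg' : ∀ j, w 1 ≤ j →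
      (Finset.Icc 1 j).image ⇑(M' v) = (Finset.Icc 1 j).image ⇑v := by
    intro j hj
    apply image_eq_of_eq_off
    intro i hi
    rw [Finset.mem_Icc] at hi
    push_neg at hi
    by_cases h0 : i = 0
    · subst h0; rw [permOn_zero hMv, permOn_zero hv]
    · exact hMvgt i (by rw [← hk]; omega)
  have hins : ∀ j : ℕ, 1 ≤ j → Finset.Icc 1 j = insert 1 (Finset.Icc 2 j) := by
    intro j hj; ext x; simp only [Finset.mem_Icc, Finset.mem_insert]; omega
  -- images of `2..j` under the shuffled permutations agree for `j ≥ w 1`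
  have hbig : ∀ j, w 1 ≤ j →
      (Finset.Icc 2 j).image ⇑(M w) = (Finset.Icc 2 j).image ⇑(M' v) := by
    intro j hj
    have hj1 : 1 ≤ j := le_trans hk1 hj
    have e1 : (Finset.Icc 1 j).image ⇑(M w)
        = insert (M w 1) ((Finset.Icc 2 j).image ⇑(M w)) := by
      rw [hins j hj1, Finset.image_insert]
    have e2 : (Finset.Icc 1 j).image ⇑(M' v)
        = insert (M' v 1) ((Finset.Icc 2 j).image ⇑(M' v)) := by
      rw [hins j hj1, Finset.image_insert]
    have e3 : (Finset.Icc 1 j).image ⇑w = insert (w 1) ((Finset.Icc 2 j).image ⇑w) := by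
      rw [hins j hj1, Finset.image_insert]
    have e4 : (Finset.Icc 1 j).image ⇑v = insert (v 1) ((Finset.Icc 2 j).image ⇑v) := by
      rw [hins j hj1, Finset.image_insert]
    have nm1 : M w 1 ∉ (Finset.Icc 2 j).image ⇑(M w) := by
      rw [Finset.mem_image]; rintro ⟨i, hi, he⟩
      have := (M w).injective he
      rw [Finset.mem_Icc] at hi; omega
    have nm2 : M' v 1 ∉ (Finset.Icc 2 j).image ⇑(M' v) := by
      rw [Finset.mem_image]; rintro ⟨i, hi, he⟩
      have := (M' v).injective he
      rw [Finset.mem_Icc] at hi; omega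
    have hwv : (Finset.Icc 1 j).image ⇑w = (Finset.Icc 1 j).image ⇑v := by
      rw [e3, e4, hk, hsets j hj]
    have hins_eq : insert (M w 1) ((Finset.Icc 2 j).image ⇑(M w))
        = insert (M' v 1) ((Finset.Icc 2 j).image ⇑(M' v)) := by
      rw [← e1, ← e2, himg j hj, himg' j hj, hwv]
    calc (Finset.Icc 2 j).image ⇑(M w)
        = (insert (M w 1) ((Finset.Icc 2 j).image ⇑(M w))).erase (M w 1) :=
          (Finset.erase_insert nm1).symm
      _ = (insert (M' v 1) ((Finset.Icc 2 j).image ⇑(M' v))).erase (M' v 1) := by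
          rw [hins_eq, hfront]
      _ = _ := Finset.erase_insert nm2
  refine ⟨hMw, hMv, hfront, ?_⟩
  intro j hj
  by_cases hjk : w 1 ≤ j
  · exact hbig j hjk
  · push_neg at hjk
    -- here M w 1 ≤ j < w 1; we show this forces j = w 1 - 1
    have hne : w 1 ≠ 1 := by
      intro hone
      have h1 : M w 1 = 1 := by rw [hone] at hMwk; exact hMwk
      omega
    have e1 := hM.2 w hw hne
    -- card argument : M w 1 ≥ w 1 - 1
    have hsub : (Finset.Icc 2 (w 1)).image ⇑w ⊆ Finset.Icc 1 (M w 1) := by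
      intro a ha
      rw [Finset.mem_Icc]
      constructor
      · rw [Finset.mem_image] at ha
        obtain ⟨i, hi, rfl⟩ := ha
        exact permOn_pos hw (by rw [Finset.mem_Icc] at hi; omega)
      · have hle := Finset.le_max ha
        rw [e1] at hle
        exact WithBot.coe_le_coe.mp hle
    have hcard : w 1 - 1 ≤ M w 1 := by
      have h1 := Finset.card_le_card hsub
      rw [Finset.card_image_of_injective _ w.injective, Nat.card_Icc, Nat.card_Icc] at h1
      omega
    have hjeq : j + 1 = w 1 := by omega
    have hMvk' : M' v (w 1) = w 1 := by rw [hk]; exact hMvk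
    have hins2 : Finset.Icc 2 (w 1) = insert (w 1) (Finset.Icc 2 j) := by
      ext x; simp only [Finset.mem_Icc, Finset.mem_insert]; omega
    have f1 : (Finset.Icc 2 (w 1)).image ⇑(M w)
        = insert (w 1) ((Finset.Icc 2 j).image ⇑(M w)) := by
      rw [hins2, Finset.image_insert, hMwk]
    have f2 : (Finset.Icc 2 (w 1)).image ⇑(M' v)
        = insert (w 1) ((Finset.Icc 2 j).image ⇑(M' v)) := by
      rw [hins2, Finset.image_insert, hMvk']
    have nk1 : w 1 ∉ (Finset.Icc 2 j).image ⇑(M w) := by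
      rw [Finset.mem_image]; rintro ⟨i, hi, he⟩
      have : i = w 1 := (M w).injective (he.trans hMwk.symm)
      rw [Finset.mem_Icc] at hi; omega
    have nk2 : w 1 ∉ (Finset.Icc 2 j).image ⇑(M' v) := by
      rw [Finset.mem_image]; rintro ⟨i, hi, he⟩
      have : i = w 1 := (M' v).injective (he.trans hMvk'.symm)
      rw [Finset.mem_Icc] at hi; omega
    calc (Finset.Icc 2 j).image ⇑(M w)
        = ((Finset.Icc 2 (w 1)).image ⇑(M w)).erase (w 1) := by
          rw [f1, Finset.erase_insert nk1]
      _ = ((Finset.Icc 2 (w 1)).image ⇑(M' v)).erase (w 1) := by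
          rw [hbig (w 1) le_rfl]
      _ = _ := by rw [f2, Finset.erase_insert nk2]

theorem stmt_17 (n : ℕ) (M M' : Equiv.Perm ℕ → Equiv.Perm ℕ)
    (hM : IsMaxShuffle n M) (hM' : IsMaxShuffle n M') :
    ∀ (i : ℕ) (w : Equiv.Perm ℕ), IsPermOn n w →
      (M^[i] w) 1 = (M'^[i] w) 1 := by
  have key : ∀ (i : ℕ) (w v : Equiv.Perm ℕ), FrontRel n w v →
      FrontRel n (M^[i] w) (M'^[i] v) := by
    intro i
    induction i with
    | zero => intro w v h; simpa using h
    | succ i ih =>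
      intro w v h
      rw [Function.iterate_succ_apply', Function.iterate_succ_apply']
      exact front_step hM hM' (ih w v h)
  intro i w hw
  exact (key i w w ⟨hw, hw, rfl, fun j _ => rfl⟩).2.2.1
end

section
/- Let n ≥ 2 and let M be a max shuffle on S_n. Then M^{2n-3}(w)(1) = 1 for every w ∈ S_n, and there exists w ∈ S_n with M^{2n-4}(w)(1) ≠ 1. Consequently, the termination number of M (the smallest m ∈ ℕ such that M^m(w)(1) = 1 for all w ∈ S_n) equals 2n - 3. -/
section MSaux
variable {n : ℕ} {M : Equiv.Perm ℕ → Equiv.Perm ℕ}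

lemma permOn_mem {w : Equiv.Perm ℕ} (hw : IsPermOn n w) {i : ℕ}
    (hi : i ∈ Finset.Icc 1 n) : w i ∈ Finset.Icc 1 n := by
  by_contra hc
  have h2 : w (w i) = w i := hw _ hc
  have h3 : w i = i := w.injective h2
  rw [h3] at hc; exact hc hi

lemma permOn_symm {w : Equiv.Perm ℕ} (hw : IsPermOn n w) : IsPermOn n w.symm := by
  intro i hi
  exact (Equiv.symm_apply_eq w).2 (hw i hi).symm

lemma max_spec (hM : IsMaxShuffle n M) {w : Equiv.Perm ℕ} (hw : IsPermOn n w)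
    (h1 : w 1 ≠ 1) :
    M w 1 ∈ (Finset.Icc 2 (w 1)).image ⇑w ∧
      ∀ x ∈ (Finset.Icc 2 (w 1)).image ⇑w, x ≤ M w 1 := by
  have h := hM.2 w hw h1
  exact ⟨Finset.mem_of_max h, fun x hx => Finset.le_max_of_eq hx h⟩

lemma step_down (hM : IsMaxShuffle n M) {w : Equiv.Perm ℕ} (hw : IsPermOn n w)
    {k : ℕ} (hk : w 1 = k) (hk2 : 2 ≤ k) (hkn : k ≤ n)
    (hcl : ∀ j ∈ Finset.Icc 1 k, w j ∈ Finset.Icc 1 k) :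
    M w 1 = k - 1 ∧ (∀ j ∈ Finset.Icc 1 (k - 1), M w j ∈ Finset.Icc 1 (k - 1)) := by
  have h1 : w 1 ≠ 1 := by omega
  obtain ⟨hmem, hub⟩ := max_spec hM hw h1
  rw [hk] at hmem hub
  obtain ⟨hpm, hfix, hab⟩ := hM.1 w hw
  rw [hk] at hfix hab
  have hsub : (Finset.Icc 2 k).image ⇑w ⊆ Finset.Icc 1 (k - 1) := by
    intro x hx
    obtain ⟨j, hj, hjx⟩ := Finset.mem_image.1 hx
    rw [Finset.mem_Icc] at hj
    have hx1 : w j ∈ Finset.Icc 1 k := hcl j (Finset.mem_Icc.2 (by omega))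
    rw [Finset.mem_Icc] at hx1
    have hne : w j ≠ k := by
      intro he
      have : j = 1 := w.injective (by rw [he, hk])
      omega
    rw [Finset.mem_Icc]; omega
  have hcard : ((Finset.Icc 2 k).image ⇑w).card = k - 1 := by
    rw [Finset.card_image_of_injective _ w.injective, Nat.card_Icc]; omega
  have heq : (Finset.Icc 2 k).image ⇑w = Finset.Icc 1 (k - 1) :=
    Finset.eq_of_subset_of_card_le hsub (by rw [Nat.card_Icc, hcard]; omega)
  have htop : M w 1 = k - 1 := by
    have h1' : M w 1 ≤ k - 1 := by
      have := hsub hmem; rw [Finset.mem_Icc] at this; omega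
    have h2' : k - 1 ≤ M w 1 := by
      apply hub
      rw [heq, Finset.mem_Icc]; omega
    omega
  refine ⟨htop, ?_⟩
  intro j hj
  rw [Finset.mem_Icc] at hj
  have hjn : j ∈ Finset.Icc 1 n := Finset.mem_Icc.2 (by omega)
  have hv : M w j ∈ Finset.Icc 1 n := permOn_mem (hM.1 w hw).1 hjn
  rw [Finset.mem_Icc] at hv
  rw [Finset.mem_Icc]
  by_contra hc
  push_neg at hc
  have hvk : k ≤ M w j := by have := hc (by omega); omega
  rcases Nat.eq_or_lt_of_le hvk with hvk' | hvk'
  · have : j = k := (M w).injective (by rw [← hvk', hfix])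
    omega
  · set v := M w j with hvdef
    have hvIcc : v ∈ Finset.Icc 1 n := Finset.mem_Icc.2 (by omega)
    have hp : w.symm v ∈ Finset.Icc 1 n := permOn_mem (permOn_symm hw) hvIcc
    have hwp : w (w.symm v) = v := w.apply_symm_apply v
    have hpk : k < w.symm v := by
      by_contra hpk
      push_neg at hpk
      rw [Finset.mem_Icc] at hp
      have := hcl (w.symm v) (Finset.mem_Icc.2 (by omega))
      rw [hwp, Finset.mem_Icc] at this
      omega
    have hMv : M w (w.symm v) = v := by rw [hab _ hpk, hwp]
    have : j = w.symm v := (M w).injective (by rw [hMv])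
    omega

lemma step_up (hM : IsMaxShuffle n M) {w : Equiv.Perm ℕ} (hw : IsPermOn n w)
    {k : ℕ} (hk : w 1 = k) (hk2 : 2 ≤ k) (hkn : k ≤ n)
    (hncl : ¬ ∀ j ∈ Finset.Icc 1 k, w j ∈ Finset.Icc 1 k) :
    k + 1 ≤ M w 1 := by
  have h1 : w 1 ≠ 1 := by omega
  obtain ⟨hmem, hub⟩ := max_spec hM hw h1
  rw [hk] at hmem hub
  push_neg at hncl
  obtain ⟨j, hj, hjv⟩ := hncl
  rw [Finset.mem_Icc] at hj
  have hjn : w j ∈ Finset.Icc 1 n := permOn_mem hw (Finset.mem_Icc.2 (by omega))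
  rw [Finset.mem_Icc] at hjn
  have hjv' : ¬ (1 ≤ w j ∧ w j ≤ k) := by rw [← Finset.mem_Icc]; exact hjv
  have hgt : k + 1 ≤ w j := by omega
  have hj1 : j ≠ 1 := by
    intro he; rw [he, hk] at hgt; omega
  have : w j ≤ M w 1 := hub _ (Finset.mem_image.2 ⟨j, Finset.mem_Icc.2 (by omega), rfl⟩)
  omega

/-- Potential function: steps remaining until the top card is 1. -/
def Phi (n : ℕ) (w : Equiv.Perm ℕ) : ℕ :=
  if w 1 = 1 then 0
  else if ∀ j ∈ Finset.Icc 1 (w 1), w j ∈ Finset.Icc 1 (w 1) then w 1 - 1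
  else 2 * n - 1 - w 1

lemma top_bounds (hn : 2 ≤ n) {w : Equiv.Perm ℕ} (hw : IsPermOn n w) :
    1 ≤ w 1 ∧ w 1 ≤ n := by
  have := permOn_mem hw (i := 1) (Finset.mem_Icc.2 (by omega))
  rw [Finset.mem_Icc] at this; exact this

lemma phi_lt (hn : 2 ≤ n) (hM : IsMaxShuffle n M) {w : Equiv.Perm ℕ}
    (hw : IsPermOn n w) (h1 : w 1 ≠ 1) : Phi n (M w) < Phi n w := by
  obtain ⟨hb1, hb2⟩ := top_bounds hn hw
  have hk2 : 2 ≤ w 1 := by omega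
  have hpm : IsPermOn n (M w) := (hM.1 w hw).1
  obtain ⟨hb1', hb2'⟩ := top_bounds hn hpm
  by_cases hcl : ∀ j ∈ Finset.Icc 1 (w 1), w j ∈ Finset.Icc 1 (w 1)
  · obtain ⟨htop, hcl'⟩ := step_down hM hw rfl hk2 hb2 hcl
    rw [Phi, Phi, if_neg h1, if_pos hcl, htop]
    by_cases h2 : w 1 - 1 = 1
    · rw [if_pos h2]; omega
    · rw [if_neg h2, if_pos hcl']; omega
  · have hklt : w 1 < n := by
      rcases Nat.eq_or_lt_of_le hb2 with he | he
      · exfalso; apply hcl; intro j hj; rw [he] at hj ⊢; exact permOn_mem hw hj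
      · exact he
    have hup : w 1 + 1 ≤ M w 1 := step_up hM hw rfl hk2 hb2 hcl
    rw [Phi, Phi, if_neg h1, if_neg hcl, if_neg (by omega : ¬ M w 1 = 1)]
    by_cases h2 : ∀ j ∈ Finset.Icc 1 (M w 1), M w j ∈ Finset.Icc 1 (M w 1)
    · rw [if_pos h2]; omega
    · rw [if_neg h2]; omega

lemma phi_le (hn : 2 ≤ n) {w : Equiv.Perm ℕ} (hw : IsPermOn n w) :
    Phi n w ≤ 2 * n - 3 := by
  obtain ⟨hb1, hb2⟩ := top_bounds hn hw
  rw [Phi]; split_ifs <;> omega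

lemma phi_pos (hn : 2 ≤ n) {w : Equiv.Perm ℕ} (hw : IsPermOn n w)
    (h1 : w 1 ≠ 1) : 1 ≤ Phi n w := by
  obtain ⟨hb1, hb2⟩ := top_bounds hn hw
  rw [Phi]; split_ifs <;> omega

lemma fixed_pt (hM : IsMaxShuffle n M) {w : Equiv.Perm ℕ} (hw : IsPermOn n w)
    (h1 : w 1 = 1) : M w = w := by
  obtain ⟨hpm, hfix, hab⟩ := hM.1 w hw
  ext i
  rcases Nat.lt_trichotomy i 1 with hi | hi | hi
  · have hi0 : i = 0 := by omega
    rw [hi0, hpm 0 (by simp), hw 0 (by simp)]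
  · rw [h1] at hfix; rw [hi, h1]; exact hfix
  · exact hab i (by omega)

lemma iter_one (hn : 2 ≤ n) (hM : IsMaxShuffle n M) :
    ∀ m : ℕ, ∀ w : Equiv.Perm ℕ, IsPermOn n w → Phi n w ≤ m → (M^[m] w) 1 = 1 := by
  intro m
  induction m with
  | zero =>
    intro w hw h
    by_contra h1
    have := phi_pos hn hw h1
    omega
  | succ m ih =>
    intro w hw h
    by_cases h1 : w 1 = 1
    · rw [Function.iterate_succ_apply, fixed_pt hM hw h1]
      apply ih w hw
      rw [Phi, if_pos h1]; omega
    · rw [Function.iterate_succ_apply]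
      exact ih (M w) (hM.1 w hw).1 (by have := phi_lt hn hM hw h1; omega)

lemma iter_perm (hM : IsMaxShuffle n M) :
    ∀ m : ℕ, ∀ w : Equiv.Perm ℕ, IsPermOn n w → IsPermOn n (M^[m] w) := by
  intro m
  induction m with
  | zero => intro w hw; exact hw
  | succ m ih =>
    intro w hw
    rw [Function.iterate_succ_apply']
    exact (hM.1 _ (ih w hw)).1

end MSaux

/-- The cycle `1 ↦ 2 ↦ ⋯ ↦ n ↦ 1`. -/
def msCyc (n : ℕ) : Equiv.Perm ℕ where
  toFun i := if 1 ≤ i ∧ i < n then i + 1 else if i = n ∧ 1 ≤ n then 1 else i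
  invFun i := if 2 ≤ i ∧ i ≤ n then i - 1 else if i = 1 ∧ 1 ≤ n then n else i
  left_inv := by
    intro i; dsimp only; split_ifs <;> omega
  right_inv := by
    intro i; dsimp only; split_ifs <;> omega

lemma msCyc_apply (n i : ℕ) :
    msCyc n i = if 1 ≤ i ∧ i < n then i + 1 else if i = n ∧ 1 ≤ n then 1 else i := rfl

lemma msCyc_permOn (n : ℕ) : IsPermOn n (msCyc n) := by
  intro i hi
  rw [Finset.mem_Icc] at hi
  rw [msCyc_apply]
  split_ifs <;> omega

section Phases
variable {n : ℕ} {M : Equiv.Perm ℕ → Equiv.Perm ℕ}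

lemma phase1 (hn : 2 ≤ n) (hM : IsMaxShuffle n M) :
    ∀ i, i ≤ n - 2 →
      IsPermOn n (M^[i] (msCyc n)) ∧
      (M^[i] (msCyc n)) 1 = i + 2 ∧
      (∀ j, 2 ≤ j → j ≤ i + 1 → (M^[i] (msCyc n)) j ∈ Finset.Icc 2 (i + 1)) ∧
      (∀ j, i + 2 ≤ j → j < n → (M^[i] (msCyc n)) j = j + 1) ∧
      (M^[i] (msCyc n)) n = 1 := by
  intro i
  induction i with
  | zero =>
    intro _
    refine ⟨msCyc_permOn n, ?_, ?_, ?_, ?_⟩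
    · rw [Function.iterate_zero_apply, msCyc_apply]; split_ifs <;> omega
    · intro j h2 h1; omega
    · intro j hj hjn
      rw [Function.iterate_zero_apply, msCyc_apply]; split_ifs <;> omega
    · rw [Function.iterate_zero_apply, msCyc_apply]; split_ifs <;> omega
  | succ i ih =>
    intro hle
    rw [Function.iterate_succ_apply']
    obtain ⟨hp, htop, hclo, htail, hlast⟩ := ih (by omega)
    set w := M^[i] (msCyc n) with hwdef
    have hkn : i + 2 < n := by omega
    have h1 : w 1 ≠ 1 := by omega
    obtain ⟨hmem, hub⟩ := max_spec hM hp h1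
    rw [htop] at hmem hub
    obtain ⟨hpm, hfix, hab⟩ := hM.1 w hp
    rw [htop] at hfix hab
    have hwk : w (i + 2) = i + 3 := htail (i + 2) le_rfl hkn
    have htop' : M w 1 = i + 3 := by
      have hle1 : M w 1 ≤ i + 3 := by
        obtain ⟨j, hj, hjx⟩ := Finset.mem_image.1 hmem
        rw [Finset.mem_Icc] at hj
        rcases Nat.lt_or_ge j (i + 2) with hj2 | hj2
        · have := hclo j hj.1 (by omega); rw [Finset.mem_Icc] at this; omega
        · have hje : j = i + 2 := by omega
          rw [hje, hwk] at hjx; omega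
      have hge : i + 3 ≤ M w 1 :=
        hub _ (Finset.mem_image.2 ⟨i + 2, Finset.mem_Icc.2 (by omega), hwk⟩)
      omega
    have hlast' : M w n = 1 := by rw [hab n (by omega), hlast]
    have htail' : ∀ j, i + 3 ≤ j → j < n → M w j = j + 1 := fun j hj hjn => by
      rw [hab j (by omega), htail j (by omega) hjn]
    refine ⟨hpm, htop', ?_, ?_, hlast'⟩
    · intro j h2 hj
      have hjn : M w j ∈ Finset.Icc 1 n :=
        permOn_mem hpm (Finset.mem_Icc.2 ⟨by omega, by omega⟩)
      rw [Finset.mem_Icc] at hjn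
      rw [Finset.mem_Icc]
      constructor
      · by_contra hlt
        push_neg at hlt
        have he1 : M w j = 1 := by omega
        have : j = n := (M w).injective (by rw [he1, hlast'])
        omega
      · by_contra hgt
        push_neg at hgt
        rcases Nat.eq_or_lt_of_le hgt with he | hlt
        · have : j = 1 := (M w).injective (by rw [← he, htop'])
          omega
        · have he2 : M w (M w j - 1) = M w j := by
            rw [htail' (M w j - 1) (by omega) (by omega)]; omega
          have := (M w).injective he2
          omega
    · intro j hj hjn
      exact htail' j (by omega) hjn

lemma phase2 (hn : 2 ≤ n) (hM : IsMaxShuffle n M) :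
    ∀ t, t ≤ n - 2 →
      IsPermOn n (M^[n - 2 + t] (msCyc n)) ∧
      (M^[n - 2 + t] (msCyc n)) 1 = n - t ∧
      (∀ j ∈ Finset.Icc 1 (n - t), (M^[n - 2 + t] (msCyc n)) j ∈ Finset.Icc 1 (n - t)) := by
  intro t
  induction t with
  | zero =>
    intro _
    obtain ⟨hp, htop, _, _, _⟩ := phase1 hn hM (n - 2) le_rfl
    simp only [Nat.add_zero, Nat.sub_zero]
    exact ⟨hp, by rw [htop]; omega, fun j hj => permOn_mem hp hj⟩
  | succ t ih =>
    intro hle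
    obtain ⟨hp, htop, hclo⟩ := ih (by omega)
    have h2 : 2 ≤ n - t := by omega
    obtain ⟨htop', hclo'⟩ := step_down hM hp htop h2 (by omega) hclo
    rw [show n - 2 + (t + 1) = (n - 2 + t) + 1 from rfl, Function.iterate_succ_apply']
    have hsub : n - (t + 1) = n - t - 1 := by omega
    refine ⟨(hM.1 _ hp).1, by rw [htop']; omega, ?_⟩
    rw [hsub]
    exact hclo'

lemma lower_bound (hn : 2 ≤ n) (hM : IsMaxShuffle n M) :
    (M^[2 * n - 4] (msCyc n)) 1 = 2 := by
  obtain ⟨_, htop, _⟩ := phase2 hn hM (n - 2) le_rfl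
  have he : 2 * n - 4 = n - 2 + (n - 2) := by omega
  rw [he, htop]
  omega

end Phases

theorem stmt_19 (n : ℕ) (hn : 2 ≤ n) (M : Equiv.Perm ℕ → Equiv.Perm ℕ)
    (hM : IsMaxShuffle n M) :
    (∀ w : Equiv.Perm ℕ, IsPermOn n w → (M^[2 * n - 3] w) 1 = 1) ∧
    (∃ w : Equiv.Perm ℕ, IsPermOn n w ∧ (M^[2 * n - 4] w) 1 ≠ 1) ∧
    sInf {m : ℕ | ∀ w : Equiv.Perm ℕ, IsPermOn n w → (M^[m] w) 1 = 1}
      = 2 * n - 3 := by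
  have hub : ∀ w : Equiv.Perm ℕ, IsPermOn n w → (M^[2 * n - 3] w) 1 = 1 :=
    fun w hw => iter_one hn hM _ w hw (phi_le hn hw)
  have hlow : (M^[2 * n - 4] (msCyc n)) 1 = 2 := lower_bound hn hM
  refine ⟨hub, ⟨msCyc n, msCyc_permOn n, by rw [hlow]; omega⟩, ?_⟩
  set T := {m : ℕ | ∀ w : Equiv.Perm ℕ, IsPermOn n w → (M^[m] w) 1 = 1} with hT
  have hmem : (2 * n - 3) ∈ T := hub
  have hupc : ∀ a ∈ T, ∀ d : ℕ, a + d ∈ T := by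
    intro a ha d
    induction d with
    | zero => exact ha
    | succ d ihd =>
      intro w hw
      have h1 := ihd w hw
      have hpw : IsPermOn n (M^[a + d] w) := iter_perm hM _ w hw
      rw [show a + (d + 1) = (a + d) + 1 from rfl, Function.iterate_succ_apply',
        fixed_pt hM hpw h1]
      exact h1
  have hne : T.Nonempty := ⟨_, hmem⟩
  have hInfT : sInf T ∈ T := Nat.sInf_mem hne
  have hle : sInf T ≤ 2 * n - 3 := Nat.sInf_le hmem
  rcases Nat.eq_or_lt_of_le hle with he | hlt
  · exact he
  · exfalso
    have h24 : 2 * n - 4 ∈ T := by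
      have heq : sInf T + (2 * n - 4 - sInf T) = 2 * n - 4 := by omega
      rw [← heq]
      exact hupc _ hInfT _
    have := h24 (msCyc n) (msCyc_permOn n)
    rw [hlow] at this
    omega
end
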